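/- arXiv:2305.14013 — 2 statements merged into one kernel-verified Lean document; each statement's English description precedes it below -/
import Mathlib

section
/- If H and G are rayless graphs that each have a Schmidt rank, and H is a topological minor of G, then the Schmidt rank of H is at most the Schmidt rank of G. -/
universe u v

/-- A topological minor embedding of `H` into `G`: an injective map `toFun` on vertices
together with, for each edge of `H`, a path in `G` joining the images of its endpoints,
such that distinct edges get internally vertex-disjoint paths whose internal vertices
avoid the image of `toFun`. -/
structure TopMinorEmb {V : Type u} {W : Type v} (H : SimpleGraph V) (G : SimpleGraph W) where
  toFun : V → W
  inj : Function.Injective toFun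
  path : ∀ ⦃a b : V⦄, H.Adj a b → G.Walk (toFun a) (toFun b)
  path_isPath : ∀ ⦃a b : V⦄ (h : H.Adj a b), (path h).IsPath
  path_symm : ∀ ⦃a b : V⦄ (h : H.Adj a b), path h.symm = (path h).reverse
  internal_avoid_image : ∀ ⦃a b : V⦄ (h : H.Adj a b) (w : W),
      w ∈ (path h).support → w ≠ toFun a → w ≠ toFun b → ∀ x : V, toFun x ≠ w
  internally_disjoint : ∀ ⦃a b a' b' : V⦄ (h : H.Adj a b) (h' : H.Adj a' b'),
      s(a, b) ≠ s(a', b') → ∀ w : W,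
        w ∈ (path h).support → w ∈ (path h').support → w = toFun a ∨ w = toFun b

/-- `H ≤ G`: some subdivision of `H` embeds as a subgraph into `G`. -/
def TopMinorLE {V : Type u} {W : Type v} (H : SimpleGraph V) (G : SimpleGraph W) : Prop :=
  Nonempty (TopMinorEmb H G)

/-- `G ≡ H`: `G` and `H` have the same topological type. -/
def TopEquiv {V : Type u} {W : Type v} (G : SimpleGraph V) (H : SimpleGraph W) : Prop :=
  TopMinorLE G H ∧ TopMinorLE H G

/-- `G` contains a ray (a one-way infinite path) as a subgraph. -/
def HasRay {V : Type u} (G : SimpleGraph V) : Prop :=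
  ∃ f : ℕ → V, Function.Injective f ∧ ∀ n, G.Adj (f n) (f (n + 1))

/-- `G` is rayless: it contains no ray as a subgraph. -/
def Rayless {V : Type u} (G : SimpleGraph V) : Prop := ¬ HasRay G

/-- Graphs (on vertex types in universe `u`), bundled with their vertex type. -/
def GraphSig := Σ V : Type u, SimpleGraph V

/-- `HasSchmidtRankAux α ⟨V, G⟩` holds iff the graph `G` has Schmidt rank `α`:
`G` has rank `0` iff it is finite, and for `α > 0`, `G` has rank `α` iff it has no
rank `< α` and there is a finite vertex set `X` such that every connected component
of `G - X` has some rank `< α`.  (For `α = 0` the clause below is equivalent to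
finiteness of `G`, since no ordinal is `< 0`.) -/
def HasSchmidtRankAux : Ordinal.{u} → GraphSig.{u} → Prop :=
  WellFounded.fix Ordinal.lt_wf fun α ih p =>
    (∀ β (hβ : β < α), ¬ ih β hβ p) ∧
    ∃ X : Set p.1, X.Finite ∧
      ∀ C : (p.2.induce Xᶜ).ConnectedComponent,
        ∃ β, ∃ hβ : β < α, ih β hβ ⟨C.supp, (p.2.induce Xᶜ).induce C.supp⟩

/-- The graph `G` has Schmidt rank `α`. -/
def HasSchmidtRank {V : Type u} (G : SimpleGraph V) (α : Ordinal.{u}) : Prop :=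
  HasSchmidtRankAux α ⟨V, G⟩

open SimpleGraph

section SchmidtRank

variable {V : Type u} {G : SimpleGraph V}

def HasSchmidtSeparator (G : SimpleGraph V) (α : Ordinal.{u}) : Prop :=
  ∃ X : Set V, X.Finite ∧ ∀ C : (G.induce Xᶜ).ConnectedComponent,
    ∃ β < α, HasSchmidtRank ((G.induce Xᶜ).induce C.supp) β

theorem hasSchmidtRank_iff {α : Ordinal.{u}} :
    HasSchmidtRank G α ↔ (∀ β < α, ¬ HasSchmidtRank G β) ∧ HasSchmidtSeparator G α := by
  unfold HasSchmidtRank HasSchmidtSeparator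
  rw [HasSchmidtRankAux, WellFounded.fix_eq]
  simp only [exists_prop]
  rfl

theorem HasSchmidtRank.hasSchmidtSeparator {α : Ordinal.{u}} (h : HasSchmidtRank G α) :
    HasSchmidtSeparator G α :=
  (hasSchmidtRank_iff.mp h).2

theorem HasSchmidtRank.unique {α β : Ordinal.{u}} (hα : HasSchmidtRank G α)
    (hβ : HasSchmidtRank G β) : α = β := by
  by_contra hne
  rcases lt_or_gt_of_ne hne with hlt | hlt
  · exact (hasSchmidtRank_iff.mp hβ).1 α hlt hα
  · exact (hasSchmidtRank_iff.mp hα).1 β hlt hβ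

/-- The least `α` admitting a separator is the rank of `G`. -/
theorem HasSchmidtSeparator.exists_hasSchmidtRank_le {β : Ordinal.{u}}
    (h : HasSchmidtSeparator G β) : ∃ α ≤ β, HasSchmidtRank G α := by
  set S := {α | HasSchmidtSeparator G α}
  have hmin : sInf S ∈ S := csInf_mem ⟨β, h⟩
  refine ⟨sInf S, csInf_le' h, hasSchmidtRank_iff.mpr ⟨fun γ hγ hγG => ?_, hmin⟩⟩
  exact notMem_of_lt_csInf' hγ hγG.hasSchmidtSeparator

end SchmidtRank

namespace TopMinorEmb

variable {V : Type u} {W : Type v} {H : SimpleGraph V} {G : SimpleGraph W}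

theorem reachable (φ : TopMinorEmb H G) {a b : V} (h : H.Reachable a b) :
    G.Reachable (φ.toFun a) (φ.toFun b) := by
  obtain ⟨p⟩ := h
  induction p with
  | nil => rfl
  | cons hadj _ ih => exact Reachable.trans ⟨φ.path hadj⟩ ih

def induce (φ : TopMinorEmb H G) {s : Set V} {t : Set W} (hs : ∀ v ∈ s, φ.toFun v ∈ t)
    (hpath : ∀ ⦃a b : V⦄ (h : H.Adj a b), a ∈ s → b ∈ s →
      ∀ w ∈ (φ.path h).support, w ∈ t) :
    TopMinorEmb (H.induce s) (G.induce t) where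
  toFun v := ⟨φ.toFun v, hs v v.2⟩
  inj _ _ hab := Subtype.ext (φ.inj (congrArg Subtype.val hab))
  path a b h := (φ.path (induce_adj.mp h)).induce t (hpath _ a.2 b.2)
  path_isPath a b h := by
    rw [Walk.isPath_def, Walk.support_induce]
    exact .of_map Subtype.val (by simpa using (φ.path_isPath _).support_nodup)
  path_symm a b h := by
    apply Walk.map_injective_of_injective (f := (Embedding.induce t).toHom)
      Subtype.val_injective
    rw [Walk.map_induce, ← Walk.reverse_map, Walk.map_induce]
    exact φ.path_symm _
  internal_avoid_image a b h w hw hwa hwb x hx := by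
    simp only [Walk.support_induce, List.mem_attachWith] at hw
    exact φ.internal_avoid_image _ w hw (fun e => hwa (Subtype.ext e))
      (fun e => hwb (Subtype.ext e)) x (congrArg Subtype.val hx)
  internally_disjoint a b a' b' h h' hne w hw hw' := by
    simp only [Walk.support_induce, List.mem_attachWith] at hw hw'
    have hne' : s(a.1, b.1) ≠ s(a'.1, b'.1) := fun e =>
      hne (Sym2.map.injective Subtype.val_injective (by simpa using e))
    simpa only [Subtype.ext_iff] using φ.internally_disjoint _ _ hne' w hw hw'

def mapComponent (φ : TopMinorEmb H G) : H.ConnectedComponent → G.ConnectedComponent :=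
  ConnectedComponent.lift (fun v => G.connectedComponentMk (φ.toFun v))
    fun _ _ p _ => ConnectedComponent.sound (φ.reachable ⟨p⟩)

theorem toFun_mem_mapComponent_supp (φ : TopMinorEmb H G) {C : H.ConnectedComponent} {v : V}
    (hv : v ∈ C.supp) : φ.toFun v ∈ (φ.mapComponent C).supp := by
  rw [ConnectedComponent.mem_supp_iff] at hv ⊢
  subst hv
  rfl

theorem support_path_subset_mapComponent_supp (φ : TopMinorEmb H G)
    {C : H.ConnectedComponent} {a b : V} (h : H.Adj a b) (ha : a ∈ C.supp) :
    ∀ w ∈ (φ.path h).support, w ∈ (φ.mapComponent C).supp := by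
  classical
  intro w hw
  have hreach : G.Reachable (φ.toFun a) w := ⟨(φ.path h).takeUntil w hw⟩
  rw [ConnectedComponent.mem_supp_iff] at ha ⊢
  subst ha
  exact (ConnectedComponent.sound hreach).symm

def restrictComponent (φ : TopMinorEmb H G) (C : H.ConnectedComponent) :
    TopMinorEmb (H.induce C.supp) (G.induce (φ.mapComponent C).supp) :=
  φ.induce (fun _ => φ.toFun_mem_mapComponent_supp)
    fun _ _ h ha _ => φ.support_path_subset_mapComponent_supp h ha

def IsInteriorVertex (φ : TopMinorEmb H G) {a b : V} (h : H.Adj a b) (w : W) : Prop :=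
  w ∈ (φ.path h).support ∧ w ≠ φ.toFun a ∧ w ≠ φ.toFun b

/-- The vertices of `H` that must be deleted so that the rest of `φ` avoids `X`. -/
def pullback (φ : TopMinorEmb H G) (X : Set W) : Set V :=
  φ.toFun ⁻¹' X ∪ {v | ∃ b, ∃ h : H.Adj v b, ∃ w ∈ X, φ.IsInteriorVertex h w}

/-- A vertex of `G` is an interior vertex of the path of at most one edge of `H`. -/
theorem finite_setOf_isInteriorVertex (φ : TopMinorEmb H G) (w : W) :
    {v | ∃ b, ∃ h : H.Adj v b, φ.IsInteriorVertex h w}.Finite := by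
  rcases Set.eq_empty_or_nonempty {v | ∃ b, ∃ h : H.Adj v b, φ.IsInteriorVertex h w}
    with hempty | ⟨v₀, b₀, h₀, hw₀, -⟩
  · exact hempty ▸ Set.finite_empty
  refine (Set.toFinite {v₀, b₀}).subset ?_
  rintro v ⟨b, h, hw, hwv, hwb⟩
  by_cases he : s(v, b) = s(v₀, b₀)
  · rcases Sym2.eq_iff.mp he with ⟨rfl, -⟩ | ⟨rfl, -⟩ <;> simp
  · rcases φ.internally_disjoint h h₀ he w hw hw₀ with rfl | rfl <;> contradiction

theorem finite_pullback (φ : TopMinorEmb H G) {X : Set W} (hX : X.Finite) :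
    (φ.pullback X).Finite := by
  refine (hX.preimage φ.inj.injOn).union
    ((hX.biUnion fun w _ => φ.finite_setOf_isInteriorVertex w).subset ?_)
  rintro v ⟨b, h, w, hwX, hw⟩
  exact Set.mem_biUnion hwX ⟨b, h, hw⟩

theorem toFun_notMem_of_notMem_pullback (φ : TopMinorEmb H G) {X : Set W} {v : V}
    (hv : v ∉ φ.pullback X) : φ.toFun v ∉ X :=
  fun hvX => hv (Or.inl hvX)

theorem support_path_subset_compl_of_notMem_pullback (φ : TopMinorEmb H G) {X : Set W}
    {a b : V} (h : H.Adj a b) (ha : a ∉ φ.pullback X) (hb : b ∉ φ.pullback X) :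
    ∀ w ∈ (φ.path h).support, w ∉ X := by
  intro w hw hwX
  by_cases hwa : w = φ.toFun a
  · exact ha (Or.inl (hwa ▸ hwX :))
  by_cases hwb : w = φ.toFun b
  · exact hb (Or.inl (hwb ▸ hwX :))
  exact ha (Or.inr ⟨b, h, w, hwX, hw, hwa, hwb⟩)

def restrictCompl (φ : TopMinorEmb H G) (X : Set W) :
    TopMinorEmb (H.induce (φ.pullback X)ᶜ) (G.induce Xᶜ) :=
  φ.induce (fun _ => φ.toFun_notMem_of_notMem_pullback)
    fun _ _ h ha hb => φ.support_path_subset_compl_of_notMem_pullback h ha hb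

end TopMinorEmb

/-- Induction on the rank of `G`: delete the finite set `φ.pullback X` from `H`, where `X`
separates `G`; each remaining component of `H` embeds into a component of `G - X`. -/
theorem TopMinorEmb.exists_hasSchmidtRank_le {β : Ordinal.{u}} {V W : Type u}
    {H : SimpleGraph V} {G : SimpleGraph W} (φ : TopMinorEmb H G) (hG : HasSchmidtRank G β) :
    ∃ α ≤ β, HasSchmidtRank H α := by
  induction β using WellFoundedLT.induction generalizing V W with
  | _ β ih =>
  obtain ⟨X, hXfin, hX⟩ := hG.hasSchmidtSeparator
  refine HasSchmidtSeparator.exists_hasSchmidtRank_le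
    ⟨φ.pullback X, φ.finite_pullback hXfin, fun C => ?_⟩
  obtain ⟨γ, hγβ, hγ⟩ := hX ((φ.restrictCompl X).mapComponent C)
  obtain ⟨α, hαγ, hα⟩ := ih γ hγβ ((φ.restrictCompl X).restrictComponent C) hγ
  exact ⟨α, hαγ.trans_lt hγβ, hα⟩

theorem schmidtRank_le_of_topMinor_general {V W : Type u} {H : SimpleGraph V} {G : SimpleGraph W}
    {α β : Ordinal.{u}}
    (hα : HasSchmidtRank H α) (hβ : HasSchmidtRank G β)
    (hle : TopMinorLE H G) : α ≤ β := by
  obtain ⟨φ⟩ := hle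
  obtain ⟨α', hα'β, hα'⟩ := φ.exists_hasSchmidtRank_le hβ
  exact hα.unique hα' ▸ hα'β

/-- If `H` and `G` are rayless graphs that each have a Schmidt rank, and `H` is a
topological minor of `G`, then the Schmidt rank of `H` is at most that of `G`. -/
theorem schmidtRank_le_of_topMinor {V W : Type u} {H : SimpleGraph V} {G : SimpleGraph W}
    (hH : Rayless H) (hG : Rayless G) {α β : Ordinal.{u}}
    (hα : HasSchmidtRank H α) (hβ : HasSchmidtRank G β)
    (hle : TopMinorLE H G) : α ≤ β :=
  schmidtRank_le_of_topMinor_general hα hβ hle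
end

section
/- Let μ be an infinite cardinal and Q a quasi-order with |Q|_≡ = μ such that P_{≤κ}(Q) is well-quasi-ordered under the domination order, where κ is a cardinal with κ < ℵ_{μ⁺}. Then |P_{≤κ}(Q)|_≡ ≤ μ, i.e. the quotient of P_{≤κ}(Q) under the equivalence A ≡ B (meaning A ≤ B and B ≤ A in the domination order) has cardinality at most μ. -/
universe u v

/-- The domination order on subsets of a quasi-order `(Q, le)`:
`A ≤ B` iff there is an injection `f : A → B` with `le a (f a)` for all `a ∈ A`. -/
def Dominates {Q : Type*} (le : Q → Q → Prop) (A B : Set Q) : Prop :=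
  ∃ f : A → B, Function.Injective f ∧ ∀ a : A, le a.1 (f a).1

/-!
Suppose `|P_{≤κ}(Q)|_≡ > μ`. In a well-quasi-order, `μ⁺` pairwise inequivalent elements
contain a strictly increasing sequence of length `μ⁺` (otherwise one extracts an infinite
antichain), so there are `A_ξ ∈ P_{≤κ}(Q)`, `ξ < μ⁺`, strictly increasing under domination.

A Hall-type theorem for wqos says that `B` dominates `A` as soon as `|A ∩ U| ≤ |B ∩ U|` for
every upward closed `U`: the part of `A` above which `B` is locally finite is matched by Hall's
marriage theorem, the rest greedily along a well-order in which every `a` has fewer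
predecessors than `B` has elements above `a`. Hence for each `ξ` some upward closed `U_ξ` has
`|A_ξ ∩ U_ξ| < |A_{ξ+1} ∩ U_ξ|`, and `ξ ↦ (U_ξ, |A_ξ ∩ U_ξ|)` is injective. But a wqo has at
most `|Q|_≡ = μ` upward closed sets (each is generated by finitely many minimal classes), and
`κ < ℵ_{μ⁺}` leaves at most `μ` cardinals below `κ`: `μ⁺` indices cannot inject into `μ · μ`.
-/

open Cardinal Set Order

section Dominates

variable {Q : Type u}

theorem Dominates.refl [Preorder Q] (A : Set Q) : Dominates (· ≤ ·) A A :=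
  ⟨id, Function.injective_id, fun a => le_refl a.1⟩

theorem Dominates.trans [Preorder Q] {A B C : Set Q}
    (hAB : Dominates (· ≤ ·) A B) (hBC : Dominates (· ≤ ·) B C) : Dominates (· ≤ ·) A C := by
  obtain ⟨f, hf, hfr⟩ := hAB
  obtain ⟨g, hg, hgr⟩ := hBC
  exact ⟨g ∘ f, hg.comp hf, fun a => (hfr a).trans (hgr (f a))⟩

theorem dominates_singleton_iff {r : Q → Q → Prop} {a b : Q} :
    Dominates r {a} {b} ↔ r a b := by
  refine ⟨fun ⟨f, _, hf⟩ => ?_, fun h => ⟨fun _ => ⟨b, rfl⟩, fun x y _ => Subsingleton.elim x y,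
    fun ⟨x, hx⟩ => by obtain rfl : x = a := hx; exact h⟩⟩
  simpa [mem_singleton_iff.1 (f ⟨a, rfl⟩).2] using hf ⟨a, rfl⟩

theorem Dominates.union {r : Q → Q → Prop} {A A' B B' : Set Q} (h : Dominates r A B)
    (h' : Dominates r A' B') (hB : Disjoint B B') : Dominates r (A ∪ A') (B ∪ B') := by
  classical
  obtain ⟨f, hf, hfr⟩ := h
  obtain ⟨f', hf', hf'r⟩ := h'
  have cross : ∀ (a : A) (a' : A'), (f a : Q) ≠ f' a' := fun a a' he =>
    hB.ne_of_mem (f a).2 (f' a').2 he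
  let g : ↥(A ∪ A') → Q := fun x =>
    if hx : x.1 ∈ A then f ⟨x, hx⟩ else f' ⟨x, x.2.resolve_left hx⟩
  have hg : ∀ x, g x ∈ B ∪ B' ∧ r x (g x) := fun x => by
    by_cases hx : x.1 ∈ A
    · simp only [g, hx, dite_true]
      exact ⟨Or.inl (f _).2, hfr ⟨x, hx⟩⟩
    · simp only [g, hx, dite_false]
      exact ⟨Or.inr (f' _).2, hf'r ⟨x, _⟩⟩
  refine ⟨fun x => ⟨g x, (hg x).1⟩, fun x y hxy => ?_, fun x => (hg x).2⟩
  replace hxy : g x = g y := congrArg Subtype.val hxy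
  by_cases hxA : x.1 ∈ A <;> by_cases hyA : y.1 ∈ A <;>
    simp only [g, hxA, hyA, dite_true, dite_false] at hxy
  · exact Subtype.ext (by simpa using congrArg Subtype.val (hf (Subtype.ext hxy)))
  · exact absurd hxy (cross _ _)
  · exact absurd hxy.symm (cross _ _)
  · exact Subtype.ext (by simpa using congrArg Subtype.val (hf' (Subtype.ext hxy)))

theorem Dominates.mk_inter_le [LE Q] {A B U : Set Q} (h : Dominates (· ≤ ·) A B)
    (hU : IsUpperSet U) : #(A ∩ U : Set Q) ≤ #(B ∩ U : Set Q) := by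
  obtain ⟨f, hf, hfle⟩ := h
  refine mk_le_of_injective (f := fun x : (A ∩ U : Set Q) =>
    ⟨f ⟨x, x.2.1⟩, (f _).2, hU (hfle ⟨x, x.2.1⟩) x.2.2⟩) fun x y hxy => ?_
  have hval : (f ⟨x, x.2.1⟩ : Q) = f ⟨y, y.2.1⟩ :=
    congrArg (fun z : ↥(B ∩ U) => (z : Q)) hxy
  exact Subtype.ext (by simpa using congrArg Subtype.val (hf (Subtype.ext hval)))

end Dominates

theorem Cardinal.mk_biUnion_lt_of_finite {α ι : Type*} {s : Set ι} (hs : s.Finite)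
    {A : ι → Set α} {ν : Cardinal} (hν : ℵ₀ ≤ ν) (h : ∀ i ∈ s, #(A i) < ν) :
    #(⋃ i ∈ s, A i : Set α) < ν := by
  induction s, hs using Set.Finite.induction_on with
  | empty => simpa using aleph0_pos.trans_le hν
  | @insert i s _ _ ih =>
    rw [biUnion_insert]
    exact (mk_union_le _ _).trans_lt (add_lt_of_lt hν (h i (mem_insert i s))
      (ih fun j hj => h j (mem_insert_of_mem i hj)))

section WellQuasiOrder

variable {Q : Type u} [Preorder Q] [WellQuasiOrderedLE Q]

instance : WellQuasiOrderedLE (Antisymmetrization Q (· ≤ ·)) :=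
  toAntisymmetrization_mono.wellQuasiOrderedLE_of_wellQuasiOrderedLE_of_surjective
    Quotient.mk_surjective

theorem exists_finite_basis (S : Set Q) : ∃ F ⊆ S, F.Finite ∧ ∀ x ∈ S, ∃ m ∈ F, m ≤ x := by
  let classes := toAntisymmetrization (· ≤ ·) '' {m | Minimal (· ∈ S) m}
  have hclasses : classes.Finite := by
    refine WellQuasiOrderedLE.finite_of_isAntichain ?_
    rintro _ ⟨m, hm, rfl⟩ _ ⟨m', hm', rfl⟩ hne hle
    rw [toAntisymmetrization_le_toAntisymmetrization_iff] at hle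
    exact hne (Quotient.sound ⟨hle, hm'.2 hm.1 hle⟩)
  have := hclasses.to_subtype
  choose rep hrep hrep_eq using fun t : classes => t.2
  refine ⟨range rep, range_subset_iff.2 fun t => (hrep t).1, finite_range rep, fun x hx => ?_⟩
  obtain ⟨m, hmx, hm⟩ := (isPWO_of_wellQuasiOrderedLE S).exists_le_minimal hx
  refine ⟨rep ⟨_, m, hm, rfl⟩, mem_range_self _, le_trans ?_ hmx⟩
  exact (Quotient.exact (hrep_eq ⟨_, m, hm, rfl⟩)).1

theorem mk_setOf_isUpperSet_le [Infinite (Antisymmetrization Q (· ≤ ·))] :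
    #{U : Set Q // IsUpperSet U} ≤ #(Antisymmetrization Q (· ≤ ·)) := by
  classical
  choose F hFU hF hcover using fun U : {U : Set Q // IsUpperSet U} => exists_finite_basis U.1
  have hmem : ∀ U x, x ∈ U.1 ↔ ∃ t ∈ toAntisymmetrization (· ≤ ·) '' F U,
      t ≤ toAntisymmetrization (· ≤ ·) x := by
    refine fun U x => ⟨fun hx => ?_, ?_⟩
    · obtain ⟨m, hm, hmx⟩ := hcover U x hx
      exact ⟨_, mem_image_of_mem _ hm, hmx⟩
    · rintro ⟨_, ⟨m, hm, rfl⟩, hmx⟩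
      exact U.2 hmx (hFU U hm)
  refine (mk_le_of_injective
    (f := fun U => ((hF U).image (toAntisymmetrization (· ≤ ·))).toFinset)
    fun U V hUV => Subtype.ext (Set.ext fun x => ?_)).trans_eq (mk_finset_of_infinite _)
  rw [Finite.toFinset_inj] at hUV
  rw [hmem, hmem, hUV]

end WellQuasiOrder

section FewAbove

variable {Q : Type u} [Preorder Q]

def fewAbove (X : Set Q) (ν : Cardinal.{u}) : Set Q :=
  {y | #(X ∩ Ici y : Set Q) < ν}

theorem isUpperSet_fewAbove (X : Set Q) (ν : Cardinal.{u}) : IsUpperSet (fewAbove X ν) :=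
  fun _ _ hyy' hy =>
    (mk_le_mk_of_subset (inter_subset_inter_right X (Ici_subset_Ici.2 hyy'))).trans_lt hy

theorem mk_inter_fewAbove_lt [WellQuasiOrderedLE Q] (X : Set Q) {ν : Cardinal.{u}}
    (hν : ℵ₀ ≤ ν) : #(X ∩ fewAbove X ν : Set Q) < ν := by
  obtain ⟨F, hFX, hF, hcover⟩ := exists_finite_basis (X ∩ fewAbove X ν)
  refine (mk_le_mk_of_subset fun x hx => ?_).trans_lt
    (mk_biUnion_lt_of_finite hF hν fun m hm => (hFX hm).2)
  obtain ⟨m, hm, hmx⟩ := hcover x hx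
  exact mem_biUnion hm ⟨hx.1, hmx⟩

end FewAbove

theorem Cardinal.mk_Iic_le_of_lt_aleph_ord_succ {μ κ : Cardinal.{u}} (hμ : ℵ₀ ≤ μ)
    (hκ : κ < ℵ_ (succ μ).ord) : #(Iic κ) ≤ lift.{u + 1} μ := by
  have hμ' : ℵ₀ ≤ succ μ := hμ.trans (le_succ μ)
  have hω : Ordinal.omega0 + (succ μ).ord = (succ μ).ord :=
    (Ordinal.isPrincipal_add_ord hμ').add_eq_right (by simpa using hμ.trans_lt (lt_succ μ))
  have ho : succ (preAleph.symm κ) < (succ μ).ord := by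
    refine (isSuccLimit_ord hμ').succ_lt ?_
    simpa [hω] using preAleph.symm.lt_iff_lt.2 hκ
  calc #(Iic κ) = #(Iic (preAleph.symm κ)) := by
        rw [← preAleph.symm.image_Iic, mk_image_eq preAleph.symm.injective]
    _ = lift (succ (preAleph.symm κ)).card := by rw [← Iio_succ, mk_Iio_ordinal]
    _ ≤ lift μ := lift_le.2 (le_of_lt_succ (lt_ord.1 ho))

section TransfiniteChoice

variable {α β : Type u}

theorem exists_injective_mem_of_mk_pred_lt (r : α → α → Prop) [IsWellOrder α r]
    (S : α → Set β) (h : ∀ a, #{b | r b a} < #(S a)) :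
    ∃ g : α → β, Function.Injective g ∧ ∀ a, g a ∈ S a := by
  have avail : ∀ a (g : ∀ b, r b a → β),
      (S a \ range fun b : {b // r b a} => g b b.2).Nonempty := fun a g =>
    nonempty_iff_ne_empty.2 fun he =>
      (h a).not_ge ((mk_le_mk_of_subset (sdiff_eq_empty.1 he)).trans mk_range_le)
  let g : α → β := IsWellFounded.wf.fix fun a g' => (avail a g').some
  have hg : ∀ a, g a ∈ S a \ range fun b : {b // r b a} => g b := fun a => by
    rw [show g a = _ from IsWellFounded.wf.fix_eq _ a]
    exact (avail a fun b _ => g b).some_mem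
  refine ⟨g, fun a b hab => ?_, fun a => (hg a).1⟩
  rcases trichotomous_of r a b with hr | hr | hr
  · exact absurd ⟨⟨a, hr⟩, hab⟩ (hg b).2
  · exact hr
  · exact absurd ⟨⟨b, hr⟩, hab.symm⟩ (hg a).2

theorem exists_injOn_ordinal_mk_lt {s : Set α} {ν : Cardinal.{u}} (hs : #s ≤ ν) :
    ∃ f : α → Ordinal.{u}, InjOn f s ∧ ∀ a ∈ s, #{b | b ∈ s ∧ f b < f a} < ν := by
  classical
  obtain ⟨e⟩ : Nonempty (s ↪ ν.ord.ToType) := by rwa [← le_def, mk_ord_toType]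
  let toOrd : ν.ord.ToType ≃o Iio ν.ord := Ordinal.ToType.mk.symm
  let f : α → Ordinal := fun a => if h : a ∈ s then toOrd (e ⟨a, h⟩) else 0
  have hf : ∀ a (h : a ∈ s), f a = toOrd (e ⟨a, h⟩) := fun a h => dif_pos h
  refine ⟨f, fun a ha b hb hab => ?_, fun a ha => ?_⟩
  · rw [hf a ha, hf b hb] at hab
    simpa using e.injective (toOrd.injective (Subtype.ext hab))
  have hlt : ∀ b (hb : b ∈ s), f b < f a → e ⟨b, hb⟩ < e ⟨a, ha⟩ := fun b hb h => by
    rwa [hf a ha, hf b hb, Subtype.coe_lt_coe, toOrd.lt_iff_lt] at h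
  refine (mk_le_of_injective (f := fun b : {b | b ∈ s ∧ f b < f a} =>
    (⟨e ⟨b, b.2.1⟩, hlt _ _ b.2.2⟩ : Iio (e ⟨a, ha⟩))) fun b b' hbb' => ?_).trans_lt ?_
  · exact Subtype.ext (by simpa using e.injective (congrArg Subtype.val hbb'))
  · simpa only [mk_ord_toType] using
      mk_Iio_lt (e ⟨a, ha⟩) (by rw [mk_ord_toType, Ordinal.type_toType])

theorem exists_isWellOrder_mk_pred_lt (c : α → Cardinal.{u}) (hc : ∀ a, ℵ₀ ≤ c a)
    (hfew : ∀ ν, ℵ₀ ≤ ν → #{a | c a < ν} < ν) :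
    ∃ r : α → α → Prop, IsWellOrder α r ∧ ∀ a, #{b | r b a} < c a := by
  have hlevel : ∀ ν, #{a | c a = ν} ≤ ν := by
    intro ν
    rcases lt_or_ge ν ℵ₀ with hν | hν
    · have : {a | c a = ν} = ∅ :=
        eq_empty_of_forall_notMem fun a (ha : c a = ν) => (hc a).not_gt (ha ▸ hν)
      simp [this]
    · refine le_of_lt_succ ((mk_le_mk_of_subset fun a (ha : c a = ν) => ?_).trans_lt
        (hfew _ (hν.trans (le_succ ν))))
      exact show c a < succ ν from ha ▸ lt_succ ν
  choose F hFinj hFlt using fun ν => exists_injOn_ordinal_mk_lt (hlevel ν)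
  let ψ : α → Cardinal.{u} ×ₗ Ordinal.{u} := fun a => toLex (c a, F (c a) a)
  have hψ : Function.Injective ψ := by
    intro a b hab
    obtain ⟨hcab, hF⟩ := Prod.mk.inj (toLex.injective hab)
    rw [← hcab] at hF
    exact hFinj (c a) rfl hcab.symm hF
  refine ⟨InvImage (· < ·) ψ, (RelEmbedding.preimage ⟨ψ, hψ⟩ (· < ·)).isWellOrder, fun a => ?_⟩
  have hsub : {b | ψ b < ψ a} ⊆
      {b | c b < c a} ∪ {b | b ∈ {x | c x = c a} ∧ F (c a) b < F (c a) a} := by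
    intro b hb
    rcases Prod.Lex.toLex_lt_toLex.1 hb with h | ⟨h, h'⟩
    · exact Or.inl h
    · dsimp only at h h'
      exact Or.inr ⟨h, by rwa [h] at h'⟩
  exact (mk_le_mk_of_subset hsub).trans_lt ((mk_union_le _ _).trans_lt
    (add_lt_of_lt (hc a) (hfew _ (hc a)) (hFlt _ a rfl)))

end TransfiniteChoice

section Hall

variable {Q : Type u} [Preorder Q]

theorem dominates_of_finite_inter_Ici {X Y : Set Q} (hfin : ∀ y ∈ Y, (X ∩ Ici y).Finite)
    (hHall : ∀ U, IsUpperSet U → #(Y ∩ U : Set Q) ≤ #(X ∩ U : Set Q)) :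
    Dominates (· ≤ ·) Y X := by
  classical
  let t : Y → Finset Q := fun y => (hfin y y.2).toFinset
  have hcard : ∀ s : Finset Y, s.card ≤ (s.biUnion t).card := by
    intro s
    let U : Set Q := ⋃ y ∈ s, Ici y.1
    have hU : IsUpperSet U := isUpperSet_iUnion₂ fun y _ => isUpperSet_Ici y.1
    have hsU : ((s.image Subtype.val : Finset Q) : Set Q) ⊆ Y ∩ U := by
      intro x hx
      obtain ⟨y, hy, rfl⟩ := Finset.mem_image.1 hx
      exact ⟨y.2, mem_biUnion hy (mem_Ici.2 le_rfl)⟩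
    have htU : ((s.biUnion t : Finset Q) : Set Q) = X ∩ U := by
      simp only [Finset.coe_biUnion, Finset.mem_coe, t, Finite.coe_toFinset, U, inter_iUnion₂]
    have := (mk_le_mk_of_subset hsU).trans ((hHall U hU).trans_eq
      (congrArg (fun S : Set Q => #S) htU.symm))
    rwa [Finset.coe_sort_coe, Finset.coe_sort_coe, mk_coe_finset, mk_coe_finset,
      Finset.card_image_of_injective _ Subtype.val_injective, Nat.cast_le] at this
  obtain ⟨f, hf, hft⟩ := (Finset.all_card_le_biUnion_card_iff_exists_injective t).1 hcard
  have hft' : ∀ y, f y ∈ X ∧ y.1 ≤ f y := fun y => by simpa [t] using hft y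
  exact ⟨fun y => ⟨f y, (hft' y).1⟩, fun y y' h => hf (congrArg Subtype.val h),
    fun y => (hft' y).2⟩

variable [WellQuasiOrderedLE Q]

theorem dominates_sdiff_fewAbove_aleph0 {X Y : Set Q}
    (hHall : ∀ U, IsUpperSet U → #(Y ∩ U : Set Q) ≤ #(X ∩ U : Set Q)) :
    Dominates (· ≤ ·) (Y \ fewAbove X ℵ₀) (X \ fewAbove X ℵ₀) := by
  set U₀ := fewAbove X ℵ₀
  let c : ↥(Y \ U₀) → Cardinal.{u} := fun y => #(X ∩ Ici y.1 : Set Q)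
  have hc : ∀ y, ℵ₀ ≤ c y := fun y => not_lt.1 y.2.2
  have hfew : ∀ ν, ℵ₀ ≤ ν → #{y | c y < ν} < ν := fun ν hν =>
    (mk_le_of_injective (f := fun y : {y | c y < ν} =>
      (⟨y.1.1, y.1.2.1, y.2⟩ : ↥(Y ∩ fewAbove X ν))) fun y y' h => Subtype.ext (Subtype.ext
        (congrArg (fun z : ↥(Y ∩ fewAbove X ν) => (z : Q)) h))).trans_lt
      ((hHall _ (isUpperSet_fewAbove X ν)).trans_lt (mk_inter_fewAbove_lt X hν))
  obtain ⟨r, hr, hpred⟩ := exists_isWellOrder_mk_pred_lt c hc hfew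
  have hS : ∀ y, c y ≤ #((X \ U₀) ∩ Ici y.1 : Set Q) := by
    intro y
    by_contra! h
    have hsplit : c y ≤ #((X \ U₀) ∩ Ici y.1 : Set Q) + #(X ∩ U₀ : Set Q) :=
      (mk_le_mk_of_subset fun x hx => by by_cases hxU : x ∈ U₀ <;> simp_all).trans
        (mk_union_le _ _)
    exact hsplit.not_gt
      (add_lt_of_lt (hc y) h ((mk_inter_fewAbove_lt X le_rfl).trans_le (hc y)))
  obtain ⟨g, hg, hgS⟩ := exists_injective_mem_of_mk_pred_lt r (fun y => (X \ U₀) ∩ Ici y.1)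
    fun y => (hpred y).trans_le (hS y)
  exact ⟨fun y => ⟨g y, (hgS y).1⟩, fun y y' h => hg (congrArg Subtype.val h),
    fun y => (hgS y).2⟩

theorem dominates_of_forall_isUpperSet {X Y : Set Q}
    (hHall : ∀ U, IsUpperSet U → #(Y ∩ U : Set Q) ≤ #(X ∩ U : Set Q)) :
    Dominates (· ≤ ·) Y X := by
  set U₀ := fewAbove X ℵ₀
  have hfin : Dominates (· ≤ ·) (Y ∩ U₀) (X ∩ U₀) := by
    refine dominates_of_finite_inter_Ici (fun y hy => ?_) fun U hU => ?_
    · exact lt_aleph0_iff_set_finite.1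
        ((mk_le_mk_of_subset (inter_subset_inter_left _ inter_subset_left)).trans_lt hy.2)
    · simpa only [inter_assoc] using hHall (U₀ ∩ U) ((isUpperSet_fewAbove X ℵ₀).inter hU)
  have := hfin.union (dominates_sdiff_fewAbove_aleph0 hHall) disjoint_sdiff_inter.symm
  rwa [inter_union_sdiff, inter_union_sdiff] at this

end Hall

section Chains

variable {α : Type u}

theorem exists_subset_mk_incompRel_le [Preorder α] [WellQuasiOrderedLE α] {μ : Cardinal.{u}}
    (h : μ < #α) : ∃ S : Set α, μ < #S ∧ ∀ i ∈ S, #{j ∈ S | IncompRel (· ≤ ·) i j} ≤ μ := by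
  by_contra! H
  choose pick hpick hbig using H
  let next : {S : Set α // μ < #S} → {S : Set α // μ < #S} := fun S => ⟨_, hbig S.1 S.2⟩
  let seq : ℕ → {S : Set α // μ < #S} := fun n => next^[n] ⟨univ, by rwa [mk_univ]⟩
  have hseq : ∀ n,
      (seq (n + 1)).1 = {j ∈ (seq n).1 | IncompRel (· ≤ ·) (pick _ (seq n).2) j} :=
    fun n => congrArg Subtype.val (Function.iterate_succ_apply' next n _)
  have hanti : Antitone fun n => (seq n).1 :=
    antitone_nat_of_succ_le fun n => (hseq n).trans_subset fun _ hj => hj.1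
  let x : ℕ → α := fun n => pick _ (seq n).2
  obtain ⟨n, m, hnm, hle⟩ := wellQuasiOrdered_le x
  have hxm : x m ∈ (seq (n + 1)).1 := hanti hnm (hpick _ _)
  rw [hseq] at hxm
  exact hxm.2.1 hle

theorem exists_strictMono_of_mk_incompRel_le [PartialOrder α] [WellFoundedLT α]
    {μ : Cardinal.{u}} (hμ : ℵ₀ ≤ μ) (hα : μ < #α)
    (hinc : ∀ i : α, #{j | IncompRel (· ≤ ·) i j} ≤ μ) :
    ∃ f : (succ μ).ord.ToType → α, StrictMono f := by
  let bad : α → Set α := fun i => insert i {j | IncompRel (· ≤ ·) i j}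
  have hbad : ∀ i, #(bad i) ≤ μ := fun i =>
    mk_insert_le.trans ((add_le_add_left (hinc i) 1).trans (add_one_eq hμ).le)
  have hIio : ∀ ξ : (succ μ).ord.ToType, #(Iio ξ) ≤ μ := fun ξ => le_of_lt_succ (by
    simpa only [mk_ord_toType] using mk_Iio_lt ξ (by rw [mk_ord_toType, Ordinal.type_toType]))
  have avail : ∀ (ξ : (succ μ).ord.ToType) (F : ∀ η, η < ξ → α),
      (⋃ η : Iio ξ, bad (F η.1 η.2))ᶜ.Nonempty := by
    refine fun ξ F => nonempty_compl.2 fun he => hα.not_ge ?_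
    calc #α = #(⋃ η : Iio ξ, bad (F η.1 η.2)) := by rw [he, mk_univ]
      _ ≤ #(Iio ξ) * ⨆ η : Iio ξ, #(bad (F η.1 η.2)) := mk_iUnion_le _
      _ ≤ μ * μ := mul_le_mul' (hIio ξ) (ciSup_le' fun η => hbad _)
      _ = μ := mul_eq_self hμ
  -- `F ξ` is a minimal element avoiding all earlier values and everything incomparable to them;
  -- minimality of `F η` then forbids `F ξ < F η` for `η < ξ`.
  let F : (succ μ).ord.ToType → α :=
    wellFounded_lt.fix fun ξ F => wellFounded_lt.min _ (avail ξ F)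
  have hF : ∀ ξ, F ξ = wellFounded_lt.min _ (avail ξ fun η _ => F η) :=
    (wellFounded_lt (α := (succ μ).ord.ToType)).fix_eq _
  have hFmem : ∀ ξ, F ξ ∉ ⋃ η : Iio ξ, bad (F η) := fun ξ => by
    rw [hF]
    exact WellFounded.min_mem _ (⋃ η : Iio ξ, bad (F η))ᶜ _
  refine ⟨F, fun η ξ hηξ => ?_⟩
  have hnotbad : F ξ ∉ bad (F η) := fun h => hFmem ξ (mem_iUnion.2 ⟨⟨η, hηξ⟩, h⟩)
  have hne : F η ≠ F ξ := fun h => hnotbad (h ▸ mem_insert _ _)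
  have hnotlt : ¬ F ξ < F η := by
    rw [hF η]
    refine wellFounded_lt.not_lt_min _
      (show F ξ ∈ (⋃ ζ : Iio η, bad (F ζ.1))ᶜ from fun h => hFmem ξ ?_)
    obtain ⟨ζ, hζ⟩ := mem_iUnion.1 h
    exact mem_iUnion.2 ⟨⟨ζ, ζ.2.trans hηξ⟩, hζ⟩
  by_cases hle : F η ≤ F ξ
  · exact hle.lt_of_ne hne
  · have hge : F ξ ≤ F η := not_not.1 fun hge => hnotbad (mem_insert_of_mem _ ⟨hle, hge⟩)
    exact absurd (hge.lt_of_ne hne.symm) hnotlt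

theorem exists_strictMono_of_lt_mk [PartialOrder α] [WellQuasiOrderedLE α] {μ : Cardinal.{u}}
    (hμ : ℵ₀ ≤ μ) (h : μ < #α) : ∃ f : (succ μ).ord.ToType → α, StrictMono f := by
  obtain ⟨S, hS, hinc⟩ := exists_subset_mk_incompRel_le h
  have hinc' : ∀ i : S, #{j : S | IncompRel (· ≤ ·) i j} ≤ μ := fun i =>
    (mk_le_mk_of_subset (t := Subtype.val ⁻¹' {j ∈ S | IncompRel (· ≤ ·) i.1 j})
      fun j hj => ⟨j.2, hj⟩).trans
      ((mk_preimage_of_injective _ _ Subtype.val_injective).trans (hinc i i.2))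
  obtain ⟨f, hf⟩ := exists_strictMono_of_mk_incompRel_le hμ hS hinc'
  exact ⟨Subtype.val ∘ f, (Subtype.strictMono_coe _).comp hf⟩

end Chains

/-- `P_{≤κ}(Q)`, preordered by domination. -/
def PowersetCardLE (Q : Type u) (κ : Cardinal.{u}) : Type u := {A : Set Q // #A ≤ κ}

instance {Q : Type u} [Preorder Q] {κ : Cardinal.{u}} : Preorder (PowersetCardLE Q κ) where
  le A B := Dominates (· ≤ ·) A.1 B.1
  le_refl A := Dominates.refl A.1
  le_trans _ _ _ := Dominates.trans

theorem not_exists_strict_dominates_chain {Q : Type u} [Preorder Q] [WellQuasiOrderedLE Q]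
    {μ κ : Cardinal.{u}} (hμ : ℵ₀ ≤ μ) (hQ : #(Antisymmetrization Q (· ≤ ·)) = μ)
    (hκ : κ < ℵ_ (succ μ).ord) :
    ¬ ∃ A : (succ μ).ord.ToType → Set Q, (∀ ξ, #(A ξ) ≤ κ) ∧ ∀ ⦃ξ η⦄, ξ < η →
      Dominates (· ≤ ·) (A ξ) (A η) ∧ ¬ Dominates (· ≤ ·) (A η) (A ξ) := by
  rintro ⟨A, hA, hchain⟩
  have := Cardinal.noMaxOrder (hμ.trans (le_succ μ))
  have : Infinite (Antisymmetrization Q (· ≤ ·)) := infinite_iff.2 (hQ ▸ hμ)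
  have hwit : ∀ ξ, ∃ U, IsUpperSet U ∧ #(A ξ ∩ U : Set Q) < #(A (succ ξ) ∩ U : Set Q) := by
    intro ξ
    by_contra! h
    exact (hchain (lt_succ ξ)).2 (dominates_of_forall_isUpperSet h)
  choose U hU hlt using hwit
  let Φ : (succ μ).ord.ToType → {U : Set Q // IsUpperSet U} × Iic κ := fun ξ =>
    (⟨U ξ, hU ξ⟩, ⟨#(A ξ ∩ U ξ : Set Q), (mk_le_mk_of_subset inter_subset_left).trans (hA ξ)⟩)
  have hΦ : ∀ ⦃ξ η⦄, ξ < η → Φ ξ ≠ Φ η := by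
    intro ξ η hξη he
    have hUeq : U ξ = U η := congrArg (fun p => p.1.1) he
    have hceq : #(A ξ ∩ U ξ : Set Q) = #(A η ∩ U η : Set Q) := congrArg (fun p => p.2.1) he
    have hsucc : #(A (succ ξ) ∩ U ξ : Set Q) ≤ #(A η ∩ U ξ : Set Q) := by
      rcases (succ_le_of_lt hξη).eq_or_lt with h | h
      · rw [h]
      · exact (hchain h).1.mk_inter_le (hU ξ)
    exact ((hlt ξ).trans_le hsucc).ne (by rw [hceq, hUeq])
  have hinj : Function.Injective Φ := fun ξ η he => by
    rcases lt_trichotomy ξ η with h | h | h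
    exacts [absurd he (hΦ h), h, absurd he.symm (hΦ h)]
  have hcount : lift.{u + 1} (succ μ) ≤ lift.{u + 1} μ :=
    calc lift.{u + 1} (succ μ) = lift.{u + 1} #(succ μ).ord.ToType := by rw [mk_ord_toType]
      _ ≤ #({U : Set Q // IsUpperSet U} × Iic κ) := by
        simpa using lift_mk_le_lift_mk_of_injective hinj
      _ = lift.{u + 1} #{U : Set Q // IsUpperSet U} * #(Iic κ) := by
        rw [mk_prod, lift_id'.{u, u + 1}]
      _ ≤ lift.{u + 1} μ * lift.{u + 1} μ :=
        mul_le_mul' (lift_le.2 (hQ ▸ mk_setOf_isUpperSet_le))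
          (mk_Iic_le_of_lt_aleph_ord_succ hμ hκ)
      _ = lift.{u + 1} μ := by rw [← lift_mul, mul_eq_self hμ]
  exact (lt_succ μ).not_ge (lift_le.1 hcount)

/-- Let `μ` be an infinite cardinal and `Q` a quasi-order with `|Q|_≡ = μ` such that
`P_{≤κ}(Q)` is well-quasi-ordered under the domination order, where `κ < ℵ_{μ⁺}`.
Then `|P_{≤κ}(Q)|_≡ ≤ μ`. -/
theorem card_quot_powersetCardLE_le {Q : Type u} (le : Q → Q → Prop)
    (hrefl : Reflexive le) (htrans : Transitive le)
    (μ : Cardinal.{u}) (hμ : Cardinal.aleph0 ≤ μ)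
    (hQ : Cardinal.mk (Quot fun a b : Q => le a b ∧ le b a) = μ)
    (κ : Cardinal.{u}) (hκ : κ < Cardinal.aleph (Order.succ μ).ord)
    (hwqo : ∀ f : ℕ → {A : Set Q // Cardinal.mk A ≤ κ},
      ∃ n m : ℕ, n < m ∧ Dominates le (f n).1 (f m).1) :
    Cardinal.mk (Quot fun A B : {A : Set Q // Cardinal.mk A ≤ κ} =>
      Dominates le A.1 B.1 ∧ Dominates le B.1 A.1) ≤ μ := by
  let _ : Preorder Q := { le, le_refl := hrefl, le_trans := fun _ _ _ => @htrans _ _ _ }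
  have : WellQuasiOrderedLE (PowersetCardLE Q κ) := ⟨hwqo⟩
  change #(Antisymmetrization (PowersetCardLE Q κ) (· ≤ ·)) ≤ μ
  rcases eq_or_ne κ 0 with rfl | hκ0
  · have : Subsingleton (PowersetCardLE Q 0) := ⟨fun A B => Subtype.ext
      ((mk_set_eq_zero_iff.1 (nonpos_iff_eq_zero.1 A.2)).trans
        (mk_set_eq_zero_iff.1 (nonpos_iff_eq_zero.1 B.2)).symm)⟩
    exact (le_one_iff_subsingleton.2 inferInstance).trans (one_le_aleph0.trans hμ)
  have : WellQuasiOrderedLE Q := ⟨fun q => by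
    obtain ⟨n, m, hnm, h⟩ := hwqo fun n =>
      ⟨{q n}, by rw [mk_singleton]; exact Cardinal.one_le_iff_ne_zero.2 hκ0⟩
    exact ⟨n, m, hnm, dominates_singleton_iff.1 h⟩⟩
  by_contra! hlt
  obtain ⟨f, hf⟩ := exists_strictMono_of_lt_mk hμ hlt
  exact not_exists_strict_dominates_chain hμ hQ hκ ⟨fun ξ => (ofAntisymmetrization _ (f ξ)).1,
    fun ξ => (ofAntisymmetrization _ (f ξ)).2,
    fun ξ η h => ofAntisymmetrization_lt_ofAntisymmetrization_iff.2 (hf h)⟩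
end
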